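/- For every pair of integers d₂, d₃ with 2 ≤ d₂ ≤ d₃, there exists a tame polynomial automorphism F of ℂ³ with mdeg F = (2, d₂, d₃). -/
import Mathlib


open MvPolynomial

/-- A polynomial automorphism of `ℂⁿ`, viewed as a `ℂ`-algebra automorphism of
`ℂ[x₁,…,xₙ]`, is *linear* if it sends each variable to a homogeneous polynomial
of degree `1` (i.e. it is induced by an invertible linear map). -/
def IsLinearAut {n : ℕ} (F : MvPolynomial (Fin n) ℂ ≃ₐ[ℂ] MvPolynomial (Fin n) ℂ) : Prop :=
  ∀ i : Fin n, (F (X i)).IsHomogeneous 1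

/-- A polynomial automorphism of `ℂⁿ` is *triangular* if it sends `x₁ ↦ x₁` and
`xᵢ ↦ xᵢ + fᵢ(x₁,…,x_{i-1})` for `i ≥ 2`, where each `fᵢ` only involves the
preceding variables. -/
def IsTriangularAut {n : ℕ} (F : MvPolynomial (Fin n) ℂ ≃ₐ[ℂ] MvPolynomial (Fin n) ℂ) : Prop :=
  (∀ i : Fin n, (i : ℕ) = 0 → F (X i) = X i) ∧
  ∀ i : Fin n, ∃ f : MvPolynomial (Fin n) ℂ,
    (∀ j ∈ f.vars, j < i) ∧ F (X i) = X i + f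

/-- A polynomial automorphism of `ℂⁿ` is *tame* if it lies in the subgroup of all
polynomial automorphisms generated by the linear and the triangular automorphisms. -/
def IsTame {n : ℕ} (F : MvPolynomial (Fin n) ℂ ≃ₐ[ℂ] MvPolynomial (Fin n) ℂ) : Prop :=
  F ∈ Subgroup.closure {G : MvPolynomial (Fin n) ℂ ≃ₐ[ℂ] MvPolynomial (Fin n) ℂ |
    IsLinearAut G ∨ IsTriangularAut G}

/-- The multidegree of a polynomial automorphism of `ℂⁿ`: the tuple of total degrees
of the images of the variables. -/
noncomputable def mdeg {n : ℕ} (F : MvPolynomial (Fin n) ℂ ≃ₐ[ℂ] MvPolynomial (Fin n) ℂ) :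
    Fin n → ℕ :=
  fun i => (F (X i)).totalDegree


noncomputable section TameExistenceAux

namespace TameExistenceAux

abbrev PP := MvPolynomial (Fin 3) ℂ

def ι1 : Fin 1 → Fin 3 := fun _ => 0
def ι2 : Fin 2 → Fin 3 := Fin.castLE (by norm_num)

lemma castLE0 : Fin.castLE (by norm_num : (2:ℕ) ≤ 3) (0 : Fin 2) = (0 : Fin 3) := rfl
lemma castLE1 : Fin.castLE (by norm_num : (2:ℕ) ≤ 3) (1 : Fin 2) = (1 : Fin 3) := rfl

lemma rename_as_aeval {n : ℕ} (g : Fin n → Fin 3) (p : MvPolynomial (Fin n) ℂ) :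
    (rename g p : PP) = aeval (fun j => X (g j)) p := by
  have := aeval_rename g (X : Fin 3 → PP) p
  rw [aeval_X_left_apply] at this
  rw [this]; rfl

lemma aeval_aeval {n m : ℕ} (v : Fin m → PP) (w : Fin n → MvPolynomial (Fin m) ℂ)
    (p : MvPolynomial (Fin n) ℂ) :
    aeval v (aeval w p) = aeval (fun j => aeval v (w j)) p := by
  rw [← comp_aeval, AlgHom.comp_apply]

lemma comp_cons2 {α β : Type*} (g : α → β) (a b : α) :
    (fun i : Fin 2 => g (![a, b] i)) = ![g a, g b] := by
  funext i; fin_cases i <;> simp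

lemma cons3_castLE {α : Type*} (x y z : α) :
    (fun i : Fin 2 => ![x, y, z] (Fin.castLE (by norm_num : (2:ℕ) ≤ 3) i)) = ![x, y] := by
  funext i; fin_cases i <;> rfl

lemma castLE_X :
    (fun j : Fin 2 => (X (Fin.castLE (by norm_num : (2:ℕ) ≤ 3) j) : PP)) = ![X 0, X 1] := by
  funext i; fin_cases i <;> rfl

def triFwd (p : MvPolynomial (Fin 1) ℂ) (q : MvPolynomial (Fin 2) ℂ) : PP →ₐ[ℂ] PP :=
  aeval ![X 0, X 1 + rename ι1 p, X 2 + rename ι2 q]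

def triBwd (p : MvPolynomial (Fin 1) ℂ) (q : MvPolynomial (Fin 2) ℂ) : PP →ₐ[ℂ] PP :=
  aeval ![X 0, X 1 - rename ι1 p, X 2 - aeval ![X 0, X 1 - rename ι1 p] q]

def triAut (p : MvPolynomial (Fin 1) ℂ) (q : MvPolynomial (Fin 2) ℂ) : PP ≃ₐ[ℂ] PP :=
  AlgEquiv.ofAlgHom (triFwd p q) (triBwd p q)
    (by
      apply algHom_ext
      intro i
      fin_cases i <;>
        simp [triFwd, triBwd, rename_as_aeval, aeval_rename, aeval_aeval, bind₁_bind₁,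
          bind₁_X_right, comp_cons2, cons3_castLE, castLE_X, Function.comp_def, ι1, ι2])
    (by
      apply algHom_ext
      intro i
      fin_cases i <;>
        simp [triFwd, triBwd, rename_as_aeval, aeval_rename, aeval_aeval, bind₁_bind₁,
          bind₁_X_right, comp_cons2, cons3_castLE, castLE_X, Function.comp_def, ι1, ι2])

@[simp] lemma triAut_apply (p : MvPolynomial (Fin 1) ℂ) (q : MvPolynomial (Fin 2) ℂ) (r : PP) :
    triAut p q r = aeval ![X 0, X 1 + rename ι1 p, X 2 + rename ι2 q] r := rfl

lemma isTriangular_triAut (p : MvPolynomial (Fin 1) ℂ) (q : MvPolynomial (Fin 2) ℂ) :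
    IsTriangularAut (triAut p q) := by
  constructor
  · intro i hi
    have h0 : i = 0 := Fin.ext hi
    subst h0; simp
  · intro i
    fin_cases i
    · exact ⟨0, by simp, by simp⟩
    · refine ⟨rename ι1 p, ?_, by simp⟩
      intro j hj
      have := vars_rename ι1 p hj
      simp only [Finset.mem_image] at this
      obtain ⟨k, -, rfl⟩ := this
      simp [ι1]
    · refine ⟨rename ι2 q, ?_, by simp⟩
      intro j hj
      have := vars_rename ι2 q hj
      simp only [Finset.mem_image] at this
      obtain ⟨k, -, rfl⟩ := this
      simp only [ι2]
      exact Fin.lt_def.mpr (by simpa using k.isLt)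

def permAut (e : Equiv.Perm (Fin 3)) : PP ≃ₐ[ℂ] PP := renameEquiv ℂ e

@[simp] lemma permAut_apply (e : Equiv.Perm (Fin 3)) (r : PP) :
    permAut e r = rename e r := rfl

lemma isLinear_permAut (e : Equiv.Perm (Fin 3)) : IsLinearAut (permAut e) := by
  intro i
  simp only [permAut_apply, rename_X]
  exact isHomogeneous_X ℂ _

abbrev TameSet : Set (PP ≃ₐ[ℂ] PP) := {G | IsLinearAut G ∨ IsTriangularAut G}

lemma permAut_mem (e : Equiv.Perm (Fin 3)) : permAut e ∈ Subgroup.closure TameSet :=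
  Subgroup.subset_closure (Or.inl (isLinear_permAut e))

lemma triAut_mem (p : MvPolynomial (Fin 1) ℂ) (q : MvPolynomial (Fin 2) ℂ) :
    triAut p q ∈ Subgroup.closure TameSet :=
  Subgroup.subset_closure (Or.inr (isTriangular_triAut p q))

def cyc : Equiv.Perm (Fin 3) := ⟨![1, 2, 0], ![2, 0, 1], by decide, by decide⟩
def cycInv : Equiv.Perm (Fin 3) := ⟨![2, 0, 1], ![1, 2, 0], by decide, by decide⟩
def swap12 : Equiv.Perm (Fin 3) := ⟨![0, 2, 1], ![0, 2, 1], by decide, by decide⟩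

lemma totalDegree_lower {p : PP} {N : ℕ}
    (h : N ≤ ((aeval (fun _ => (Polynomial.X : Polynomial ℂ))) p).natDegree) :
    N ≤ p.totalDegree := by
  refine h.trans ?_
  have := MvPolynomial.aeval_natDegree_le (n := 1) p le_rfl
    (fun _ => (Polynomial.X : Polynomial ℂ)) (fun i => by simp [Polynomial.natDegree_X])
  simpa using this

lemma tdu {i : Fin 3} {M : PP} {k : ℕ} (h : M.totalDegree ≤ k) (hk : 1 ≤ k) :
    (X i + M).totalDegree ≤ k :=
  (totalDegree_add _ _).trans (max_le (by simp [totalDegree_X, hk]) h)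

lemma pow_deg_le {p : PP} {k m : ℕ} (h : p.totalDegree ≤ k) : (p ^ m).totalDegree ≤ m * k :=
  (totalDegree_pow _ _).trans (Nat.mul_le_mul le_rfl h)

def uu : Polynomial ℂ := Polynomial.X + Polynomial.X ^ 2

lemma uu_natDegree : uu.natDegree = 2 := by
  rw [uu, Polynomial.natDegree_add_eq_right_of_natDegree_lt] <;>
    simp [Polynomial.natDegree_X_pow, Polynomial.natDegree_X]

lemma uu_ne_zero : uu ≠ 0 := by
  intro h
  have := uu_natDegree
  rw [h] at this
  simp at this

lemma nd1 {b : ℕ} (hb : 1 ≤ b) : (Polynomial.X + uu ^ b).natDegree = 2 * b := by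
  have h : (uu ^ b).natDegree = 2 * b := by
    rw [Polynomial.natDegree_pow, uu_natDegree]; ring
  rw [Polynomial.natDegree_add_eq_right_of_natDegree_lt, h]
  rw [h, Polynomial.natDegree_X]; omega

lemma nd2 {a e : ℕ} (ha : 1 ≤ a) :
    (Polynomial.X + uu ^ a * Polynomial.X ^ e).natDegree = 2 * a + e := by
  have h : (uu ^ a * Polynomial.X ^ e : Polynomial ℂ).natDegree = 2 * a + e := by
    rw [Polynomial.natDegree_mul (pow_ne_zero _ uu_ne_zero) (pow_ne_zero _ Polynomial.X_ne_zero),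
      Polynomial.natDegree_pow, Polynomial.natDegree_pow, uu_natDegree, Polynomial.natDegree_X]
    ring
  rw [Polynomial.natDegree_add_eq_right_of_natDegree_lt, h]
  rw [h, Polynomial.natDegree_X]; omega

lemma nd3 {b : ℕ} (hb : 1 ≤ b) :
    (Polynomial.X + Polynomial.X * uu ^ b).natDegree = 1 + 2 * b := by
  have h : (Polynomial.X * uu ^ b : Polynomial ℂ).natDegree = 1 + 2 * b := by
    rw [Polynomial.natDegree_mul Polynomial.X_ne_zero (pow_ne_zero _ uu_ne_zero),
      Polynomial.natDegree_pow, uu_natDegree, Polynomial.natDegree_X]; ring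
  rw [Polynomial.natDegree_add_eq_right_of_natDegree_lt, h]
  rw [h, Polynomial.natDegree_X]; omega

lemma nd4 {b c : ℕ} (hb : 1 ≤ b) :
    (Polynomial.X + (Polynomial.X + Polynomial.X * uu ^ b) * uu ^ c).natDegree
      = 1 + 2 * b + 2 * c := by
  have hA : (Polynomial.X + Polynomial.X * uu ^ b : Polynomial ℂ) ≠ 0 := by
    intro h0
    have := nd3 hb
    rw [h0] at this
    simp at this
    omega
  have h : ((Polynomial.X + Polynomial.X * uu ^ b) * uu ^ c : Polynomial ℂ).natDegree
      = 1 + 2 * b + 2 * c := by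
    rw [Polynomial.natDegree_mul hA (pow_ne_zero _ uu_ne_zero),
      Polynomial.natDegree_pow, uu_natDegree, nd3 hb]; ring
  rw [Polynomial.natDegree_add_eq_right_of_natDegree_lt, h]
  rw [h, Polynomial.natDegree_X]; omega

lemma degP_le (i j : Fin 3) : (X i + X j ^ 2 : PP).totalDegree ≤ 2 :=
  tdu (by simp [totalDegree_X_pow]) (by norm_num)

end TameExistenceAux

end TameExistenceAux

open TameExistenceAux
theorem no_name (d₂ d₃ : ℕ) (h₂ : 2 ≤ d₂) (h₂₃ : d₂ ≤ d₃) :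
    ∃ F : MvPolynomial (Fin 3) ℂ ≃ₐ[ℂ] MvPolynomial (Fin 3) ℂ,
      IsTame F ∧ mdeg F = ![2, d₂, d₃] := by
  have hXim : ∀ (i : Fin 3), (aeval (fun _ => (Polynomial.X : Polynomial ℂ))) (X i : PP)
      = Polynomial.X := fun i => by simp
  rcases Nat.even_or_odd d₂ with hpar | hpar
  · -- d₂ even
    obtain ⟨b, hb⟩ := hpar
    have hb1 : 1 ≤ b := by omega
    set a := d₃ / 2 with ha
    set e := d₃ % 2 with he
    have hd₃ : d₃ = 2 * a + e := by omega
    have ha1 : 1 ≤ a := by omega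
    have he1 : e ≤ 1 := by omega
    set F : PP ≃ₐ[ℂ] PP := triAut ((X 0 : MvPolynomial (Fin 1) ℂ) ^ 2) 0
      * permAut cyc
      * triAut ((X 0 : MvPolynomial (Fin 1) ℂ) ^ b)
          ((X 0 : MvPolynomial (Fin 2) ℂ) ^ a * (X 1) ^ e) with hFdef
    refine ⟨F, ?_, ?_⟩
    · exact mul_mem (mul_mem (triAut_mem _ _) (permAut_mem _)) (triAut_mem _ _)
    · have hF0 : F (X 0) = X 1 + X 0 ^ 2 := by
        rw [hFdef]
        simp only [AlgEquiv.mul_apply]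
        simp [cyc, rename_as_aeval, ι1, ι2, aeval_aeval, castLE0, castLE1]
      have hF1 : F (X 1) = X 2 + (X 1 + X 0 ^ 2) ^ b := by
        rw [hFdef]
        simp only [AlgEquiv.mul_apply]
        simp [cyc, rename_as_aeval, ι1, ι2, aeval_aeval, castLE0, castLE1]
      have hF2 : F (X 2) = X 0 + (X 1 + X 0 ^ 2) ^ a * X 2 ^ e := by
        rw [hFdef]
        simp only [AlgEquiv.mul_apply]
        simp [cyc, rename_as_aeval, ι1, ι2, aeval_aeval, castLE0, castLE1]
      have hd0 : (F (X 0)).totalDegree = 2 := by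
        rw [hF0]
        refine le_antisymm (degP_le _ _) (totalDegree_lower ?_)
        rw [show (aeval (fun _ => (Polynomial.X : Polynomial ℂ))) ((X 1 + X 0 ^ 2 : PP)) = uu by
          simp [uu], uu_natDegree]
      have hd1 : (F (X 1)).totalDegree = d₂ := by
        rw [hF1]
        have hub : (X 2 + (X 1 + X 0 ^ 2) ^ b : PP).totalDegree ≤ b * 2 :=
          tdu (pow_deg_le (degP_le 1 0)) (by omega)
        have hlb : 2 * b ≤ (X 2 + (X 1 + X 0 ^ 2) ^ b : PP).totalDegree := by
          refine totalDegree_lower ?_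
          rw [show (aeval (fun _ => (Polynomial.X : Polynomial ℂ)))
              ((X 2 + (X 1 + X 0 ^ 2) ^ b : PP)) = Polynomial.X + uu ^ b by simp [uu],
            nd1 hb1]
        omega
      have hd2 : (F (X 2)).totalDegree = d₃ := by
        rw [hF2]
        have hub : (X 0 + (X 1 + X 0 ^ 2) ^ a * X 2 ^ e : PP).totalDegree ≤ a * 2 + e :=
          tdu ((totalDegree_mul _ _).trans
            (add_le_add (pow_deg_le (degP_le 1 0))
              ((totalDegree_pow _ _).trans (by simp [totalDegree_X])))) (by omega)
        have hlb : 2 * a + e ≤ (X 0 + (X 1 + X 0 ^ 2) ^ a * X 2 ^ e : PP).totalDegree := by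
          refine totalDegree_lower ?_
          rw [show (aeval (fun _ => (Polynomial.X : Polynomial ℂ)))
              ((X 0 + (X 1 + X 0 ^ 2) ^ a * X 2 ^ e : PP))
              = Polynomial.X + uu ^ a * Polynomial.X ^ e by simp [uu],
            nd2 ha1]
        omega
      funext i
      fin_cases i
      · exact hd0
      · exact hd1
      · exact hd2
  · -- d₂ odd
    obtain ⟨b, hb⟩ := hpar
    have hb1 : 1 ≤ b := by omega
    rcases Nat.even_or_odd d₃ with hd₃par | hd₃par
    · -- d₃ even
      obtain ⟨a, ha⟩ := hd₃par
      have ha1 : 1 ≤ a := by omega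
      set F : PP ≃ₐ[ℂ] PP := triAut 0 ((X 1 : MvPolynomial (Fin 2) ℂ) ^ 2)
        * permAut cyc * triAut 0 ((X 0 : MvPolynomial (Fin 2) ℂ) * (X 1) ^ b) * permAut cycInv
        * permAut swap12 * triAut 0 ((X 1 : MvPolynomial (Fin 2) ℂ) ^ a) * permAut swap12
        * permAut cycInv with hFdef
      refine ⟨F, ?_, ?_⟩
      · exact mul_mem (mul_mem (mul_mem (mul_mem (mul_mem (mul_mem (mul_mem
          (triAut_mem _ _) (permAut_mem _)) (triAut_mem _ _)) (permAut_mem _))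
          (permAut_mem _)) (triAut_mem _ _)) (permAut_mem _)) (permAut_mem _)
      · have hF0 : F (X 0) = X 2 + X 1 ^ 2 := by
          rw [hFdef]
          simp only [AlgEquiv.mul_apply]
          simp [cyc, cycInv, swap12, rename_as_aeval, ι1, ι2, aeval_aeval, castLE0, castLE1]
        have hF1 : F (X 1) = X 0 + X 1 * (X 2 + X 1 ^ 2) ^ b := by
          rw [hFdef]
          simp only [AlgEquiv.mul_apply]
          simp [cyc, cycInv, swap12, rename_as_aeval, ι1, ι2, aeval_aeval, castLE0, castLE1]
        have hF2 : F (X 2) = X 1 + (X 2 + X 1 ^ 2) ^ a := by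
          rw [hFdef]
          simp only [AlgEquiv.mul_apply]
          simp [cyc, cycInv, swap12, rename_as_aeval, ι1, ι2, aeval_aeval, castLE0, castLE1]
        have hd0 : (F (X 0)).totalDegree = 2 := by
          rw [hF0]
          refine le_antisymm (degP_le _ _) (totalDegree_lower ?_)
          rw [show (aeval (fun _ => (Polynomial.X : Polynomial ℂ))) ((X 2 + X 1 ^ 2 : PP)) = uu by
            simp [uu], uu_natDegree]
        have hd1 : (F (X 1)).totalDegree = d₂ := by
          rw [hF1]
          have hub : (X 0 + X 1 * (X 2 + X 1 ^ 2) ^ b : PP).totalDegree ≤ 1 + b * 2 :=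
            tdu ((totalDegree_mul _ _).trans
              (add_le_add (by simp [totalDegree_X]) (pow_deg_le (degP_le 2 1)))) (by omega)
          have hlb : 1 + 2 * b ≤ (X 0 + X 1 * (X 2 + X 1 ^ 2) ^ b : PP).totalDegree := by
            refine totalDegree_lower ?_
            rw [show (aeval (fun _ => (Polynomial.X : Polynomial ℂ)))
                ((X 0 + X 1 * (X 2 + X 1 ^ 2) ^ b : PP))
                = Polynomial.X + Polynomial.X * uu ^ b by simp [uu],
              nd3 hb1]
          omega
        have hd2 : (F (X 2)).totalDegree = d₃ := by
          rw [hF2]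
          have hub : (X 1 + (X 2 + X 1 ^ 2) ^ a : PP).totalDegree ≤ a * 2 :=
            tdu (pow_deg_le (degP_le 2 1)) (by omega)
          have hlb : 2 * a ≤ (X 1 + (X 2 + X 1 ^ 2) ^ a : PP).totalDegree := by
            refine totalDegree_lower ?_
            rw [show (aeval (fun _ => (Polynomial.X : Polynomial ℂ)))
                ((X 1 + (X 2 + X 1 ^ 2) ^ a : PP)) = Polynomial.X + uu ^ a by simp [uu],
              nd1 ha1]
          omega
        funext i
        fin_cases i
        · exact hd0
        · exact hd1
        · exact hd2
    · -- d₃ odd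
      obtain ⟨c, hc⟩ : ∃ c, d₃ = 2 * b + 1 + 2 * c := by
        obtain ⟨c', hc'⟩ := hd₃par
        exact ⟨(d₃ - d₂) / 2, by omega⟩
      set F : PP ≃ₐ[ℂ] PP := triAut 0 ((X 1 : MvPolynomial (Fin 2) ℂ) ^ 2)
        * permAut cyc * triAut 0 ((X 0 : MvPolynomial (Fin 2) ℂ) * (X 1) ^ b) * permAut cycInv
        * permAut swap12 * triAut 0 ((X 0 : MvPolynomial (Fin 2) ℂ) * (X 1) ^ c) * permAut swap12
        * permAut cycInv with hFdef
      refine ⟨F, ?_, ?_⟩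
      · exact mul_mem (mul_mem (mul_mem (mul_mem (mul_mem (mul_mem (mul_mem
          (triAut_mem _ _) (permAut_mem _)) (triAut_mem _ _)) (permAut_mem _))
          (permAut_mem _)) (triAut_mem _ _)) (permAut_mem _)) (permAut_mem _)
      · have hF0 : F (X 0) = X 2 + X 1 ^ 2 := by
          rw [hFdef]
          simp only [AlgEquiv.mul_apply]
          simp [cyc, cycInv, swap12, rename_as_aeval, ι1, ι2, aeval_aeval, castLE0, castLE1]
        have hF1 : F (X 1) = X 0 + X 1 * (X 2 + X 1 ^ 2) ^ b := by
          rw [hFdef]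
          simp only [AlgEquiv.mul_apply]
          simp [cyc, cycInv, swap12, rename_as_aeval, ι1, ι2, aeval_aeval, castLE0, castLE1]
        have hF2 : F (X 2) = X 1 + (X 0 + X 1 * (X 2 + X 1 ^ 2) ^ b) * (X 2 + X 1 ^ 2) ^ c := by
          rw [hFdef]
          simp only [AlgEquiv.mul_apply]
          simp [cyc, cycInv, swap12, rename_as_aeval, ι1, ι2, aeval_aeval, castLE0, castLE1]
        have hd0 : (F (X 0)).totalDegree = 2 := by
          rw [hF0]
          refine le_antisymm (degP_le _ _) (totalDegree_lower ?_)
          rw [show (aeval (fun _ => (Polynomial.X : Polynomial ℂ))) ((X 2 + X 1 ^ 2 : PP)) = uu by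
            simp [uu], uu_natDegree]
        have hd1 : (F (X 1)).totalDegree = d₂ := by
          rw [hF1]
          have hub : (X 0 + X 1 * (X 2 + X 1 ^ 2) ^ b : PP).totalDegree ≤ 1 + b * 2 :=
            tdu ((totalDegree_mul _ _).trans
              (add_le_add (by simp [totalDegree_X]) (pow_deg_le (degP_le 2 1)))) (by omega)
          have hlb : 1 + 2 * b ≤ (X 0 + X 1 * (X 2 + X 1 ^ 2) ^ b : PP).totalDegree := by
            refine totalDegree_lower ?_
            rw [show (aeval (fun _ => (Polynomial.X : Polynomial ℂ)))
                ((X 0 + X 1 * (X 2 + X 1 ^ 2) ^ b : PP))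
                = Polynomial.X + Polynomial.X * uu ^ b by simp [uu],
              nd3 hb1]
          omega
        have hd2 : (F (X 2)).totalDegree = d₃ := by
          rw [hF2]
          have hub : (X 1 + (X 0 + X 1 * (X 2 + X 1 ^ 2) ^ b) * (X 2 + X 1 ^ 2) ^ c
              : PP).totalDegree ≤ (1 + b * 2) + c * 2 :=
            tdu ((totalDegree_mul _ _).trans
              (add_le_add
                (tdu ((totalDegree_mul _ _).trans
                  (add_le_add (by simp [totalDegree_X]) (pow_deg_le (degP_le 2 1)))) (by omega))
                (pow_deg_le (degP_le 2 1)))) (by omega)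
          have hlb : 1 + 2 * b + 2 * c ≤ (X 1 + (X 0 + X 1 * (X 2 + X 1 ^ 2) ^ b)
              * (X 2 + X 1 ^ 2) ^ c : PP).totalDegree := by
            refine totalDegree_lower ?_
            rw [show (aeval (fun _ => (Polynomial.X : Polynomial ℂ)))
                ((X 1 + (X 0 + X 1 * (X 2 + X 1 ^ 2) ^ b) * (X 2 + X 1 ^ 2) ^ c : PP))
                = Polynomial.X + (Polynomial.X + Polynomial.X * uu ^ b) * uu ^ c by simp [uu],
              nd4 hb1]
          omega
        funext i
        fin_cases i
        · exact hd0
        · exact hd1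
        · exact hd2
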